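/- arXiv:1611.08936 — 4 statements merged into one kernel-verified Lean document; each statement's English description precedes it below -/
import Mathlib

section
/- Let θ be a real random variable with density f such that f(z - s)/f(z) ≤ c for all z with f(z) ≠ 0 and all |s| ≤ σ, and suppose the set {z : f(z) = 0} has Lebesgue measure zero. Then for any two real numbers x, y with |x - y| ≤ σ and any measurable set O ⊆ ℝ, P(x + θ ∈ O) ≤ c · P(y + θ ∈ O). -/
open MeasureTheory

theorem ae_comp_sub_ne_zero {G M : Type*} [MeasurableSpace G] [AddGroup G] [MeasurableAdd G]
    [Zero M] {μ : Measure G} [μ.IsAddRightInvariant] {f : G → M} (hf : μ {z | f z = 0} = 0)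
    (y : G) : ∀ᵐ z ∂μ, f (z - y) ≠ 0 :=
  (measurePreserving_sub_right μ y).quasiMeasurePreserving.ae (p := fun z => f z ≠ 0)
    (ae_iff.2 (by simpa only [not_not] using hf))

theorem noise_adding_eps_dp_general (f : ℝ → ℝ) (c σ : ℝ)
    (hf_int : Integrable f)
    (hzero : volume {z : ℝ | f z = 0} = 0)
    (hratio : ∀ s : ℝ, |s| ≤ σ → ∀ z : ℝ, f z ≠ 0 → f (z - s) ≤ c * f z) :
    ∀ x y : ℝ, |x - y| ≤ σ → ∀ O : Set ℝ, MeasurableSet O →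
      ∫ z in O, f (z - x) ≤ c * ∫ z in O, f (z - y) := by
  intro x y hxy O _
  -- `z - x = (z - y) - (x - y)`, so the ratio bound applies wherever `f (z - y) ≠ 0`.
  have hle : ∀ᵐ z, f (z - x) ≤ c * f (z - y) :=
    (ae_comp_sub_ne_zero hzero y).mono fun z hz => by
      simpa only [sub_sub_sub_cancel_right] using hratio (x - y) hxy (z - y) hz
  calc ∫ z in O, f (z - x)
      ≤ ∫ z in O, c * f (z - y) :=
        setIntegral_mono_ae (hf_int.comp_sub_right x).integrableOn
          ((hf_int.comp_sub_right y).const_mul c).integrableOn hle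
    _ = c * ∫ z in O, f (z - y) := integral_const_mul c _

/-- If the density f has a zero set of Lebesgue measure zero and bounded ratio
f(z-s) ≤ c f(z) wherever f(z) ≠ 0, for all |s| ≤ σ, then for adjacent x, y
(|x - y| ≤ σ) and any measurable O, P(x + θ ∈ O) ≤ c · P(y + θ ∈ O). -/
theorem noise_adding_eps_dp (f : ℝ → ℝ) (c σ : ℝ) (hc : 1 ≤ c) (hσ : 0 ≤ σ)
    (hf_nonneg : ∀ z, 0 ≤ f z)
    (hf_int : Integrable f)
    (hzero : volume {z : ℝ | f z = 0} = 0)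
    (hratio : ∀ s : ℝ, |s| ≤ σ → ∀ z : ℝ, f z ≠ 0 → f (z - s) ≤ c * f z) :
    ∀ x y : ℝ, |x - y| ≤ σ → ∀ O : Set ℝ, MeasurableSet O →
      ∫ z in O, f (z - x) ≤ c * ∫ z in O, f (z - y) :=
  noise_adding_eps_dp_general f c σ hf_int hzero hratio
end

section
/- Suppose f is a continuous probability density on ℝ, σ > 0, and there is an interval [a, b] with b - a > σ on which f vanishes identically, while f(z) > 0 for all z in (b, b + σ]. Then for any ε > 0, the mechanism A(x) = x + θ (θ with density f) is not ε-differentially private: there exist x, y with |x - y| ≤ σ and a measurable set O with P(x + θ ∈ O) > 0 but P(y + θ ∈ O) = 0. -/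
open MeasureTheory Set

/- Take x = 0, y = σ and O = (b, b + σ]. The density is positive on O, so O has positive mass
under f; translated by σ, O lands in (b - σ, b] ⊆ [a, b], where f vanishes. -/

theorem setIntegral_pos_of_pos_on {X : Type*} [MeasurableSpace X] {μ : Measure X} {f : X → ℝ}
    {s : Set X} (hs : MeasurableSet s) (hμs : μ s ≠ 0) (hfi : IntegrableOn f s μ)
    (hpos : ∀ x ∈ s, 0 < f x) : 0 < ∫ x in s, f x ∂μ := by
  have hnonneg : 0 ≤ᵐ[μ.restrict s] f :=
    (ae_restrict_iff' hs).2 <| .of_forall fun x hx ↦ (hpos x hx).le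
  rw [setIntegral_pos_iff_support_of_nonneg_ae hnonneg hfi,
    inter_eq_self_of_subset_right fun x hx ↦ Function.mem_support.2 (hpos x hx).ne']
  exact pos_iff_ne_zero.2 hμs

theorem zero_interval_not_eps_dp_general (f : ℝ → ℝ) (a b σ : ℝ)
    (hσ : 0 < σ) (hgap : σ < b - a)
    (hf_cont : Continuous f)
    (hzero : ∀ z ∈ Icc a b, f z = 0)
    (hpos : ∀ z ∈ Ioc b (b + σ), 0 < f z) :
    ∃ (x y : ℝ) (O : Set ℝ), MeasurableSet O ∧ |x - y| ≤ σ ∧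
      (0 < ∫ z in O, f (z - x)) ∧ (∫ z in O, f (z - y)) = 0 := by
  refine ⟨0, σ, Ioc b (b + σ), measurableSet_Ioc, by simp [abs_of_pos hσ], ?_, ?_⟩
  · have hvol : volume (Ioc b (b + σ)) ≠ 0 := by simpa using hσ
    simpa using setIntegral_pos_of_pos_on measurableSet_Ioc hvol hf_cont.integrableOn_Ioc hpos
  · exact setIntegral_eq_zero_of_forall_eq_zero fun z hz ↦
      hzero (z - σ) ⟨by linarith [hz.1], by linarith [hz.2]⟩

/-- If a continuous density f vanishes on an interval [a,b] of length > σ but is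
positive on (b, b+σ], then the noise-adding mechanism fails ε-differential
privacy for every ε: some adjacent pair x, y and set O have
P(x + θ ∈ O) > 0 while P(y + θ ∈ O) = 0. -/
theorem zero_interval_not_eps_dp (f : ℝ → ℝ) (a b σ : ℝ)
    (hab : a < b) (hσ : 0 < σ) (hgap : σ < b - a)
    (hf_cont : Continuous f)
    (hf_nonneg : ∀ z, 0 ≤ f z)
    (hf_one : ∫ z : ℝ, f z = 1)
    (hzero : ∀ z ∈ Icc a b, f z = 0)
    (hpos : ∀ z ∈ Ioc b (b + σ), 0 < f z) :
    ∃ (x y : ℝ) (O : Set ℝ), MeasurableSet O ∧ |x - y| ≤ σ ∧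
      (0 < ∫ z in O, f (z - x)) ∧ (∫ z in O, f (z - y)) = 0 :=
  zero_interval_not_eps_dp_general f a b σ hσ hgap hf_cont hzero hpos
end

section
/- Let θ have density f and suppose: (i) f(z - s) ≤ c · f(z) for all z with f(z) ≠ 0 and all |s| ≤ σ; and let Z = {z : f(z) = 0}. Then for any x, y with y = x + σ' where |σ'| ≤ σ, and any measurable O, P(x + θ ∈ O) ≤ c · P(y + θ ∈ O) + ∫_{Z} f(z + σ') dz. That is, the one-dimensional mechanism A(x) = x + θ is (log c, δ)-differentially private with δ = sup_{|σ'|≤σ} ∫_{Z} f(z + σ') dz. -/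
/-!
Pointwise, `f (z - x) ≤ c * f (z - y) + 1_{f (z - y) = 0} * f (z - x)`: off the zero set this is
the ratio bound with shift `x - y`, on it the right side is `f (z - x)`. Integrating over `O`,
the indicator term only grows when `O` is replaced by the whole line, and a translation turns it
into the mass that the shifted density puts on `Z`.
-/

open MeasureTheory

theorem le_mul_add_indicator_setOf_eq_zero {α : Type*} {u v : α → ℝ} {c : ℝ}
    (huv : ∀ w, v w ≠ 0 → u w ≤ c * v w) (w : α) :
    u w ≤ c * v w + {w | v w = 0}.indicator u w := by
  by_cases hw : v w = 0
  · simp [hw]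
  · simpa [Set.indicator_apply, hw] using huv w hw

theorem setIntegral_le_mul_add_setIntegral_setOf_eq_zero {α : Type*} [MeasurableSpace α]
    {μ : Measure α} {u v : α → ℝ} {c : ℝ} (hu : Integrable u μ) (hv : Integrable v μ)
    (hu_nonneg : 0 ≤ᵐ[μ] u) (huv : ∀ w, v w ≠ 0 → u w ≤ c * v w) (O : Set α) :
    ∫ w in O, u w ∂μ ≤ c * ∫ w in O, v w ∂μ + ∫ w in {w | v w = 0}, u w ∂μ := by
  have hZ : NullMeasurableSet {w | v w = 0} μ :=
    hv.aemeasurable.nullMeasurableSet_preimage (measurableSet_singleton 0)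
  have hind : Integrable ({w | v w = 0}.indicator u) μ := hu.indicator₀ hZ
  calc ∫ w in O, u w ∂μ
      ≤ ∫ w in O, (c * v w + {w | v w = 0}.indicator u w) ∂μ :=
        setIntegral_mono hu.integrableOn ((hv.const_mul c).add hind).integrableOn
          (le_mul_add_indicator_setOf_eq_zero huv)
    _ = c * ∫ w in O, v w ∂μ + ∫ w in O, {w | v w = 0}.indicator u w ∂μ := by
        rw [integral_add (hv.const_mul c).integrableOn hind.integrableOn, integral_const_mul]
    _ ≤ c * ∫ w in O, v w ∂μ + ∫ w, {w | v w = 0}.indicator u w ∂μ :=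
        add_le_add le_rfl <| setIntegral_le_integral hind
          (hu_nonneg.mono fun w hw => Set.indicator_nonneg (fun _ _ => hw) w)
    _ = c * ∫ w in O, v w ∂μ + ∫ w in {w | v w = 0}, u w ∂μ := by
        rw [integral_indicator₀ hZ]

theorem setIntegral_preimage_sub_right {E : Type*} [NormedAddCommGroup E] [NormedSpace ℝ E]
    (g : ℝ → E) (s : Set ℝ) (y : ℝ) :
    ∫ z in (· - y) ⁻¹' s, g (z - y) = ∫ z in s, g z :=
  (measurePreserving_sub_right volume y).setIntegral_preimage_emb
    (measurableEmbedding_subRight y) g s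

theorem noise_adding_eps_delta_dp_general (f : ℝ → ℝ) (c σ : ℝ)
    (hf_nonneg : ∀ z, 0 ≤ f z)
    (hf_int : Integrable f)
    (hratio : ∀ s : ℝ, |s| ≤ σ → ∀ z : ℝ, f z ≠ 0 → f (z - s) ≤ c * f z) :
    ∀ x y : ℝ, |x - y| ≤ σ → ∀ O : Set ℝ, MeasurableSet O →
      ∫ z in O, f (z - x) ≤ c * (∫ z in O, f (z - y)) +
        ∫ z in {z : ℝ | f z = 0}, f (z - x + y) := by
  intro x y hxy O _
  have hshift : ∀ z, f (z - y) ≠ 0 → f (z - x) ≤ c * f (z - y) := fun z hz => by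
    simpa using hratio (x - y) hxy (z - y) hz
  have hzero : ∫ z in {z | f (z - y) = 0}, f (z - x) = ∫ z in {z | f z = 0}, f (z - x + y) := by
    simpa only [Set.preimage_ofPred_eq, sub_add_cancel, ← sub_add_eq_add_sub] using
      setIntegral_preimage_sub_right (fun w => f (w + y - x)) {z | f z = 0} y
  rw [← hzero]
  exact setIntegral_le_mul_add_setIntegral_setOf_eq_zero (hf_int.comp_sub_right x)
    (hf_int.comp_sub_right y) (Filter.Eventually.of_forall fun z => hf_nonneg _) hshift O

/-- (log c, δ)-DP with δ given by the mass that the shifted density puts on the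
zero set Z = {z : f z = 0}: for |x - y| ≤ σ and measurable O,
P(x + θ ∈ O) ≤ c · P(y + θ ∈ O) + ∫_Z f(z - x + y) dz. -/
theorem noise_adding_eps_delta_dp (f : ℝ → ℝ) (c σ : ℝ) (hc : 1 ≤ c) (hσ : 0 ≤ σ)
    (hf_nonneg : ∀ z, 0 ≤ f z)
    (hf_int : Integrable f)
    (hratio : ∀ s : ℝ, |s| ≤ σ → ∀ z : ℝ, f z ≠ 0 → f (z - s) ≤ c * f z) :
    ∀ x y : ℝ, |x - y| ≤ σ → ∀ O : Set ℝ, MeasurableSet O →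
      ∫ z in O, f (z - x) ≤ c * (∫ z in O, f (z - y)) +
        ∫ z in {z : ℝ | f z = 0}, f (z - x + y) :=
  noise_adding_eps_delta_dp_general f c σ hf_nonneg hf_int hratio
end

section
/- If a probability density f on ℝ is continuous at some point c₀ with f(c₀) = 0, and f is not identically zero in any neighborhood to one side, then for every ε ≥ 0 and every σ > 0 the mechanism A(x) = x + θ (θ with density f) fails ε-differential privacy: the supremum over adjacent x, y and sets O of P(x+θ∈O)/P(y+θ∈O) is infinite. In particular, the density f(z) = (|z|/2)e^{-|z|} is not ε-differentially private for any ε, since f(0)=0. -/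
/-!
If `e^ε f(c) < f(c - s)` at continuity points, the strict inequality `e^ε f(u) < f(u - s)`
persists on a ball around `c`, and integrating over that ball gives an event that the mechanism
at input `s` produces with more than `e^ε` times the probability it has at input `0`.
For `f(z) = (|z|/2)e^{-|z|}` take `c = 0` and `s = σ`: then `f(c) = 0 < f(-σ)` for every `ε`.
-/

open MeasureTheory

theorem MeasureTheory.LocallyIntegrable.comp_sub_right {G E : Type*} [MeasurableSpace G]
    [TopologicalSpace G] [AddGroup G] [IsTopologicalAddGroup G] [BorelSpace G] [NormedAddCommGroup E]
    {μ : Measure G} [μ.IsAddRightInvariant] {f : G → E} (hf : LocallyIntegrable f μ) (g : G) :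
    LocallyIntegrable (fun t => f (t - g)) μ := by
  refine (locallyIntegrable_map_homeomorph (Homeomorph.subRight g) (f := f)).1 ?_
  rwa [Homeomorph.coe_subRight, map_sub_right_eq_self]

theorem setIntegral_lt_setIntegral_of_forall_lt {X : Type*} [MeasurableSpace X] {μ : Measure X}
    {s : Set X} {f g : X → ℝ} (hs : MeasurableSet s) (hμs : μ s ≠ 0)
    (hf : IntegrableOn f s μ) (hg : IntegrableOn g s μ) (hlt : ∀ x ∈ s, f x < g x) :
    ∫ x in s, f x ∂μ < ∫ x in s, g x ∂μ := by
  rw [← sub_pos, ← integral_sub hg hf, setIntegral_pos_iff_support_of_nonneg_ae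
    (ae_restrict_of_forall_mem hs fun x hx => sub_nonneg.2 (hlt x hx).le) (hg.sub hf)]
  refine (pos_iff_ne_zero.2 hμs).trans_le (measure_mono fun x hx => ⟨?_, hx⟩)
  exact sub_ne_zero.2 (hlt x hx).ne'

/-- `∫ u in O, f (u - x)` is `P(x + θ ∈ O)` when the noise `θ` has density `f`. -/
def IsAdditiveNoiseDP (f : ℝ → ℝ) (ε σ : ℝ) : Prop :=
  ∀ x y : ℝ, |x - y| ≤ σ → ∀ O : Set ℝ, MeasurableSet O →
    ∫ u in O, f (u - x) ≤ Real.exp ε * ∫ u in O, f (u - y)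

theorem exists_setIntegral_lt_setIntegral_comp_sub {f : ℝ → ℝ} (hf : LocallyIntegrable f)
    {c s a : ℝ} (hc : ContinuousAt f c) (hcs : ContinuousAt f (c - s))
    (hlt : a * f c < f (c - s)) :
    ∃ O : Set ℝ, MeasurableSet O ∧ a * ∫ u in O, f u < ∫ u in O, f (u - s) := by
  have hshift : ContinuousAt (fun u => f (u - s)) c :=
    hcs.comp_of_eq (continuousAt_id.sub continuousAt_const) rfl
  obtain ⟨δ, hδ, hball⟩ :=
    Metric.eventually_nhds_iff_ball.1 ((continuousAt_const.mul hc).eventually_lt hshift hlt)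
  have hint : ∀ {g : ℝ → ℝ}, LocallyIntegrable g → IntegrableOn g (Metric.ball c δ) := fun hg =>
    (hg.integrableOn_isCompact (isCompact_closedBall c δ)).mono_set Metric.ball_subset_closedBall
  refine ⟨Metric.ball c δ, measurableSet_ball, ?_⟩
  rw [← integral_const_mul]
  exact setIntegral_lt_setIntegral_of_forall_lt measurableSet_ball
    (Metric.measure_ball_pos volume c hδ).ne' ((hint hf).const_mul a)
    (hint (hf.comp_sub_right s)) hball

theorem not_isAdditiveNoiseDP_of_eq_zero {f : ℝ → ℝ} (hf : LocallyIntegrable f)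
    {c s : ℝ} (hc : ContinuousAt f c) (hcs : ContinuousAt f (c - s))
    (hzero : f c = 0) (hpos : 0 < f (c - s)) (ε : ℝ) {σ : ℝ} (hsσ : |s| ≤ σ) :
    ¬ IsAdditiveNoiseDP f ε σ := by
  intro hdp
  obtain ⟨O, hO, hlt⟩ := exists_setIntegral_lt_setIntegral_comp_sub hf hc hcs
    (a := Real.exp ε) (by rwa [hzero, mul_zero])
  have hle := hdp s 0 (by rwa [sub_zero]) O hO
  simp only [sub_zero] at hle
  linarith

/-- The density f(z) = (|z|/2)e^{-|z|} vanishes at 0, and the corresponding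
noise-adding mechanism is not ε-differentially private for any ε ≥ 0 and any
adjacency parameter σ > 0. -/
theorem abs_exp_density_not_eps_dp
    (f : ℝ → ℝ) (hf : ∀ z, f z = (|z| / 2) * Real.exp (-|z|)) :
    ∀ ε : ℝ, 0 ≤ ε → ∀ σ : ℝ, 0 < σ →
      ¬ (∀ x y : ℝ, |x - y| ≤ σ → ∀ O : Set ℝ, MeasurableSet O →
          ∫ u in O, f (u - x) ≤ Real.exp ε * ∫ u in O, f (u - y)) := by
  intro ε _ σ hσ
  have hcont : Continuous f := by
    rw [funext hf]
    fun_prop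
  refine not_isAdditiveNoiseDP_of_eq_zero (c := 0) (s := σ) hcont.locallyIntegrable
    hcont.continuousAt hcont.continuousAt (by simp [hf]) ?_ ε (abs_of_pos hσ).le
  rw [hf, zero_sub, abs_neg, abs_of_pos hσ]
  positivity
end
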